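/- arXiv:1811.12218 — 2 statements merged into one kernel-verified Lean document; each statement's English description precedes it below -/
import Mathlib

section
/- Let (Ω, S) be an association scheme, and let x, y ∈ S be basis relations with n_x = n_y = k. Then |x*y| = k if and only if c_{x,s}^{y} = 1 for every s ∈ x*y. Here x*y denotes the complex product: the set of basis relations t ∈ S such that c_{x*,y}^{t} ≠ 0, equivalently t ⊆ x* ∘ y (relational composition). -/
open Finset

abbrev BRel (Ω : Type*) := Finset (Ω × Ω)

variable {Ω : Type*} [Fintype Ω] [DecidableEq Ω]

/-- The diagonal relation `1_Ω`. -/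
def diagRel (Ω : Type*) [Fintype Ω] [DecidableEq Ω] : BRel Ω :=
  Finset.univ.filter (fun p => p.1 = p.2)

/-- The converse relation `r*`. -/
def convRel (r : BRel Ω) : BRel Ω := r.image Prod.swap

/-- Relational composition `a ∘ b`. -/
def compBRel (a b : BRel Ω) : BRel Ω :=
  Finset.univ.filter (fun p => ∃ γ, (p.1, γ) ∈ a ∧ (γ, p.2) ∈ b)

/-- An association scheme on a finite set `Ω`: a partition `S` of `Ω × Ω` into nonempty
basis relations, containing the diagonal, closed under converse, with well-defined
intersection numbers `c r s t`. -/
structure AssocScheme (Ω : Type*) [Fintype Ω] [DecidableEq Ω] where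
  S : Finset (BRel Ω)
  nonempty : ∀ s ∈ S, s.Nonempty
  partition : ∀ p : Ω × Ω, ∃! s, s ∈ S ∧ p ∈ s
  diag_mem : diagRel Ω ∈ S
  conv_mem : ∀ s ∈ S, convRel s ∈ S
  c : BRel Ω → BRel Ω → BRel Ω → ℕ
  c_spec : ∀ r ∈ S, ∀ s ∈ S, ∀ t ∈ S, ∀ p ∈ t,
    (Finset.univ.filter (fun γ => (p.1, γ) ∈ r ∧ (γ, p.2) ∈ s)).card = c r s t

namespace AssocScheme

variable (X : AssocScheme Ω)

/-- The valency `n_s = c_{s,s*}^{1}`. -/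
def n (s : BRel Ω) : ℕ := X.c s (convRel s) (diagRel Ω)

/-- The complex product `rs` of two basis relations: all `t ∈ S` with `c_{r,s}^t ≠ 0`. -/
def cp (r s : BRel Ω) : Finset (BRel Ω) := X.S.filter (fun t => X.c r s t ≠ 0)

/-- The complex product of two sets of basis relations. -/
def cpS (A B : Finset (BRel Ω)) : Finset (BRel Ω) :=
  A.biUnion fun a => B.biUnion fun b => X.cp a b

/-- `S_k`: the basis relations of valency `k`. -/
def Sk (k : ℕ) : Finset (BRel Ω) := X.S.filter (fun s => X.n s = k)

/-- `x ∼ y`: every `s` in the complex product `x*y` satisfies `c_{x,s}^y = 1`. -/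
def adj (x y : BRel Ω) : Prop := ∀ s ∈ X.cp (convRel x) y, X.c x s y = 1

/-- `r(α,β)`: the unique basis relation containing `(α,β)`. -/
noncomputable def rel (α β : Ω) : BRel Ω := (X.partition (α, β)).choose

/-- The indistinguishing number `c(s) = Σ_t c_{t,t*}^s`. -/
def ind (s : BRel Ω) : ℕ := ∑ t ∈ X.S, X.c t (convRel t) s

/-- `k`-saturated: every at most four element subset of `S_k` has a common neighbor. -/
def kSaturated (k : ℕ) : Prop :=
  ∀ T ⊆ X.Sk k, T.card ≤ 4 → ∃ y ∈ X.Sk k, ∀ x ∈ T, X.adj y x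

/-- `r ∈ x*z` and `s ∈ z*y` are linked with respect to `(x,y,z)`, with witness `t`. -/
def linked (k : ℕ) (x y z r s t : BRel Ω) : Prop :=
  ∃ q ∈ X.Sk k, X.adj q x ∧ X.adj q y ∧ X.adj q z ∧
    ∃ u ∈ X.cp (convRel x) q, ∃ v ∈ X.cp (convRel y) q, ∃ w ∈ X.cp (convRel z) q,
      t ∈ X.cp r s ∧
      X.cp (convRel x) z ∩ X.cp u (convRel w) = {r} ∧
      X.cp (convRel z) y ∩ X.cp w (convRel v) = {s} ∧
      X.cp (convRel x) y ∩ X.cp u (convRel v) = {t}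

/-- Desarguesian with respect to `S_k`. -/
def Desarguesian (k : ℕ) : Prop :=
  ∀ x ∈ X.Sk k, ∀ y ∈ X.Sk k, ∀ z ∈ X.Sk k, X.adj x z → X.adj z y →
    ∀ r ∈ X.cp (convRel x) z, ∀ s ∈ X.cp (convRel z) y, ∃ t, X.linked k x y z r s t

end AssocScheme

/-- `αr = {β : (α,β) ∈ r}`. -/
def relImage (r : BRel Ω) (α : Ω) : Finset Ω := (r.filter (fun p => p.1 = α)).image Prod.snd

/-- The restriction `r_{x,y} = r ∩ (αx × αy)`. -/
def restrictRel (α : Ω) (r x y : BRel Ω) : BRel Ω :=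
  r.filter (fun p => p.1 ∈ relImage x α ∧ p.2 ∈ relImage y α)


/-- An algebraic isomorphism: a bijection between the sets of basis relations
preserving all intersection numbers. -/
def AlgIso {Ω Ω' : Type*} [Fintype Ω] [DecidableEq Ω] [Fintype Ω'] [DecidableEq Ω']
    (X : AssocScheme Ω) (X' : AssocScheme Ω') (φ : BRel Ω → BRel Ω') : Prop :=
  Set.BijOn φ ↑X.S ↑X'.S ∧
    ∀ r ∈ X.S, ∀ s ∈ X.S, ∀ t ∈ X.S, X.c r s t = X'.c (φ r) (φ s) (φ t)

/-- A `φ`-faithful map with domain `D`. -/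
def Faithful {Ω Ω' : Type*} [Fintype Ω] [DecidableEq Ω] [Fintype Ω'] [DecidableEq Ω']
    (X : AssocScheme Ω) (X' : AssocScheme Ω') (φ : BRel Ω → BRel Ω')
    (D : Finset Ω) (f : Ω → Ω') : Prop :=
  Set.InjOn f ↑D ∧ ∀ a ∈ D, ∀ b ∈ D, φ (X.rel a b) = X'.rel (f a) (f b)

/-- `f` is `φ`-extendable to the point `γ`. -/
def ExtendableAt {Ω Ω' : Type*} [Fintype Ω] [DecidableEq Ω] [Fintype Ω'] [DecidableEq Ω']
    (X : AssocScheme Ω) (X' : AssocScheme Ω') (φ : BRel Ω → BRel Ω')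
    (D : Finset Ω) (f : Ω → Ω') (γ : Ω) : Prop :=
  ∃ g : Ω → Ω', (∀ a ∈ D, g a = f a) ∧ Faithful X X' φ (insert γ D) g


lemma mem_convRel {r : BRel Ω} {a b : Ω} : (a, b) ∈ convRel r ↔ (b, a) ∈ r := by
  constructor
  · intro h
    simp only [convRel, Finset.mem_image] at h
    obtain ⟨⟨p, q⟩, hpq, h2⟩ := h
    simp only [Prod.swap_prod_mk, Prod.mk.injEq] at h2
    obtain ⟨h3, h4⟩ := h2
    subst h3; subst h4; exact hpq
  · intro h
    simp only [convRel, Finset.mem_image]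
    exact ⟨(b, a), h, rfl⟩

lemma card_relImage_eq (X : AssocScheme Ω) {x : BRel Ω} (hx : x ∈ X.S) (α : Ω) :
    (univ.filter (fun γ => (α, γ) ∈ x)).card = X.n x := by
  have hd : ((α, α) : Ω × Ω) ∈ diagRel Ω := by simp [diagRel]
  have h := X.c_spec x hx (convRel x) (X.conv_mem x hx) (diagRel Ω) X.diag_mem (α, α) hd
  rw [AssocScheme.n, ← h]
  congr 1
  ext γ
  simp [mem_convRel, and_self]

lemma sum_c_eq (X : AssocScheme Ω) {x y : BRel Ω} (hx : x ∈ X.S) (hy : y ∈ X.S)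
    {α β : Ω} (hp : (α, β) ∈ y) :
    ∑ s ∈ X.S, X.c x s y = X.n x := by
  have key : ∀ s ∈ X.S, (univ.filter (fun γ => (α, γ) ∈ x ∧ (γ, β) ∈ s)).card = X.c x s y :=
    fun s hs => X.c_spec x hx s hs y hy (α, β) hp
  rw [← card_relImage_eq X hx α]
  have hA : (univ.filter (fun γ => (α, γ) ∈ x)) =
      X.S.biUnion (fun s => univ.filter (fun γ => (α, γ) ∈ x ∧ (γ, β) ∈ s)) := by
    ext γ
    simp only [mem_filter, mem_univ, true_and, mem_biUnion]
    constructor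
    · intro h
      obtain ⟨s, ⟨hs, hmem⟩, _⟩ := X.partition (γ, β)
      exact ⟨s, hs, h, hmem⟩
    · rintro ⟨s, _, h, _⟩; exact h
  rw [hA, Finset.card_biUnion]
  · exact Finset.sum_congr rfl fun s hs => (key s hs).symm
  · intro s hs t ht hst
    simp only [Finset.disjoint_left, mem_filter, mem_univ, true_and]
    rintro γ ⟨_, h1⟩ ⟨_, h2⟩
    obtain ⟨u, _, huniq⟩ := X.partition (γ, β)
    exact hst ((huniq s ⟨hs, h1⟩).trans (huniq t ⟨ht, h2⟩).symm)

lemma c_ne_zero_iff_aux (X : AssocScheme Ω) {x y s : BRel Ω} (hx : x ∈ X.S) (hy : y ∈ X.S)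
    (hs : s ∈ X.S) : X.c (convRel x) y s ≠ 0 ↔ X.c x s y ≠ 0 := by
  constructor
  · intro h
    obtain ⟨⟨γ, β⟩, hgb⟩ := X.nonempty s hs
    rw [← X.c_spec (convRel x) (X.conv_mem x hx) y hy s hs (γ, β) hgb,
      Finset.card_ne_zero] at h
    obtain ⟨α, hα⟩ := h
    simp only [mem_filter, mem_univ, true_and] at hα
    obtain ⟨h1, h2⟩ := hα
    rw [mem_convRel] at h1
    rw [← X.c_spec x hx s hs y hy (α, β) h2, Finset.card_ne_zero]
    exact ⟨γ, by simp [h1, hgb]⟩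
  · intro h
    obtain ⟨⟨α, β⟩, hab⟩ := X.nonempty y hy
    rw [← X.c_spec x hx s hs y hy (α, β) hab, Finset.card_ne_zero] at h
    obtain ⟨γ, hγ⟩ := h
    simp only [mem_filter, mem_univ, true_and] at hγ
    obtain ⟨h1, h2⟩ := hγ
    rw [← X.c_spec (convRel x) (X.conv_mem x hx) y hy s hs (γ, β) h2, Finset.card_ne_zero]
    exact ⟨α, by simp [mem_convRel, h1, hab]⟩

theorem card_complex_product_iff (X : AssocScheme Ω) (k : ℕ) (hk : 1 < k)
    (x : BRel Ω) (hx : x ∈ X.S) (y : BRel Ω) (hy : y ∈ X.S)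
    (hnx : X.n x = k) (hny : X.n y = k) :
    (X.cp (convRel x) y).card = k ↔ ∀ s ∈ X.cp (convRel x) y, X.c x s y = 1 := by
  obtain ⟨⟨α, β⟩, hp⟩ := X.nonempty y hy
  have hsum : ∑ s ∈ X.S, X.c x s y = k := by rw [sum_c_eq X hx hy hp, hnx]
  have hsub : X.cp (convRel x) y ⊆ X.S := Finset.filter_subset _ _
  have hsum2 : ∑ s ∈ X.cp (convRel x) y, X.c x s y = k := by
    rw [← hsum]
    apply Finset.sum_subset hsub
    intro s hs hns
    simp only [AssocScheme.cp, mem_filter, not_and, not_not] at hns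
    by_contra hne
    exact (c_ne_zero_iff_aux X hx hy hs).mpr hne (hns hs)
  have hpos : ∀ s ∈ X.cp (convRel x) y, 1 ≤ X.c x s y := by
    intro s hs
    simp only [AssocScheme.cp, mem_filter] at hs
    exact Nat.one_le_iff_ne_zero.mpr ((c_ne_zero_iff_aux X hx hy hs.1).mp hs.2)
  constructor
  · intro hcard s hs
    have heq : ∑ t ∈ X.cp (convRel x) y, 1 = ∑ t ∈ X.cp (convRel x) y, X.c x t y := by
      rw [hsum2, Finset.sum_const, smul_eq_mul, mul_one, hcard]
    exact ((Finset.sum_eq_sum_iff_of_le hpos).mp heq s hs).symm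
  · intro h1
    have : ∑ s ∈ X.cp (convRel x) y, X.c x s y = (X.cp (convRel x) y).card := by
      rw [Finset.card_eq_sum_ones]
      exact Finset.sum_congr rfl h1
    omega
end

section
/- Let (Ω, S) be an association scheme, k > 1 an integer, and let c be the maximum of the indistinguishing numbers c(s) over irreflexive s ∈ S. Suppose |S_k| > 4c(k−1), where S_k = {x ∈ S : n_x = k}. Then the scheme is k-saturated: for every subset T ⊆ S_k with |T| ≤ 4, there exists y ∈ S_k with y ∼ x for all x ∈ T. -/
open Finset

variable {Ω : Type*} [Fintype Ω] [DecidableEq Ω]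

section Aux

open scoped Classical

namespace AssocScheme

variable {Ω : Type*} [Fintype Ω] [DecidableEq Ω] (X : AssocScheme Ω)

lemma rel_mem_S (α β : Ω) : X.rel α β ∈ X.S := (X.partition (α, β)).choose_spec.1.1

lemma mem_rel (α β : Ω) : (α, β) ∈ X.rel α β := (X.partition (α, β)).choose_spec.1.2

lemma rel_eq {s : BRel Ω} (hs : s ∈ X.S) {α β : Ω} (h : (α, β) ∈ s) : X.rel α β = s :=
  ((X.partition (α, β)).choose_spec.2 s ⟨hs, h⟩).symm

lemma mem_rel_iff {t : BRel Ω} (ht : t ∈ X.S) {α β : Ω} : (α, β) ∈ t ↔ X.rel α β = t :=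
  ⟨fun h => X.rel_eq ht h, fun h => h ▸ X.mem_rel α β⟩

lemma mem_convRel {r : BRel Ω} {a b : Ω} : (a, b) ∈ convRel r ↔ (b, a) ∈ r := by
  constructor
  · intro h
    obtain ⟨p, hp, he⟩ := Finset.mem_image.mp h
    obtain ⟨c, d⟩ := p
    simp only [Prod.swap_prod_mk, Prod.mk.injEq] at he
    rwa [← he.1, ← he.2]
  · intro h
    exact Finset.mem_image.mpr ⟨(b, a), h, rfl⟩

lemma n_eq_card {y : BRel Ω} (hy : y ∈ X.S) (α : Ω) :
    (Finset.univ.filter fun γ => (α, γ) ∈ y).card = X.n y := by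
  have hd : (α, α) ∈ diagRel Ω := by simp [diagRel]
  have h := X.c_spec y hy (convRel y) (X.conv_mem y hy) (diagRel Ω) X.diag_mem (α, α) hd
  rw [show X.n y = X.c y (convRel y) (diagRel Ω) from rfl, ← h]
  congr 1
  ext γ
  simp [mem_convRel, and_self]

lemma relImage_eq (y : BRel Ω) (α : Ω) :
    relImage y α = Finset.univ.filter fun γ => (α, γ) ∈ y := by
  ext β
  simp only [relImage, Finset.mem_image, Finset.mem_filter, Finset.mem_univ, true_and]
  constructor
  · rintro ⟨⟨a, b⟩, ⟨hm, ha⟩, hb⟩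
    simp only at ha hb
    rwa [← ha, ← hb]
  · intro h
    exact ⟨(α, β), ⟨h, rfl⟩, rfl⟩

lemma card_filter_fiber (P : Ω → Prop) [DecidablePred P] (f : Ω → BRel Ω) (hf : ∀ δ, f δ ∈ X.S) :
    (Finset.univ.filter P).card
      = ∑ t ∈ X.S, (Finset.univ.filter fun δ => P δ ∧ f δ = t).card := by
  rw [Finset.card_eq_sum_card_fiberwise (t := X.S) (f := f) (fun a _ => hf a)]
  exact Finset.sum_congr rfl fun t _ => by rw [Finset.filter_filter]

lemma sum_c_eq {x y : BRel Ω} (hx : x ∈ X.S) (hy : y ∈ X.S) :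
    ∑ t ∈ X.S, X.c x t y = X.n x := by
  obtain ⟨⟨α, β⟩, hp⟩ := X.nonempty y hy
  have h1 := X.card_filter_fiber (fun γ => (α, γ) ∈ x) (fun γ => X.rel γ β)
    (fun δ => X.rel_mem_S δ β)
  rw [X.n_eq_card hx α] at h1
  rw [h1]
  refine Finset.sum_congr rfl fun t ht => ?_
  rw [← X.c_spec x hx t ht y hy (α, β) hp]
  congr 1
  ext γ
  simp only [Finset.mem_filter, Finset.mem_univ, true_and]
  exact and_congr_right fun _ => X.mem_rel_iff ht

lemma c_ne_zero_iff {x t y : BRel Ω} (hx : x ∈ X.S) (ht : t ∈ X.S) (hy : y ∈ X.S) :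
    X.c x t y ≠ 0 ↔ ∃ α γ δ, (α, γ) ∈ x ∧ (γ, δ) ∈ t ∧ (α, δ) ∈ y := by
  constructor
  · intro h
    obtain ⟨⟨α, δ⟩, hp⟩ := X.nonempty y hy
    rw [← X.c_spec x hx t ht y hy (α, δ) hp] at h
    obtain ⟨γ, hγ⟩ := Finset.card_ne_zero.mp h
    simp only [Finset.mem_filter, Finset.mem_univ, true_and] at hγ
    exact ⟨α, γ, δ, hγ.1, hγ.2, hp⟩
  · rintro ⟨α, γ, δ, h1, h2, h3⟩
    rw [← X.c_spec x hx t ht y hy (α, δ) h3]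
    exact Finset.card_ne_zero.mpr ⟨γ, by simp [h1, h2]⟩

lemma c_conv_ne_zero_iff {x y t : BRel Ω} (hx : x ∈ X.S) (hy : y ∈ X.S) (ht : t ∈ X.S) :
    X.c (convRel x) y t ≠ 0 ↔ ∃ α γ δ, (α, γ) ∈ x ∧ (γ, δ) ∈ t ∧ (α, δ) ∈ y := by
  constructor
  · intro h
    obtain ⟨⟨γ, δ⟩, hp⟩ := X.nonempty t ht
    rw [← X.c_spec (convRel x) (X.conv_mem x hx) y hy t ht (γ, δ) hp] at h
    obtain ⟨α, hα⟩ := Finset.card_ne_zero.mp h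
    simp only [Finset.mem_filter, Finset.mem_univ, true_and] at hα
    exact ⟨α, γ, δ, mem_convRel.mp hα.1, hp, hα.2⟩
  · rintro ⟨α, γ, δ, h1, h2, h3⟩
    rw [← X.c_spec (convRel x) (X.conv_mem x hx) y hy t ht (γ, δ) h2]
    exact Finset.card_ne_zero.mpr ⟨α, by simp [mem_convRel, h1, h3]⟩

lemma mem_cp_conv_iff {x y t : BRel Ω} (hx : x ∈ X.S) (hy : y ∈ X.S) :
    t ∈ X.cp (convRel x) y ↔ t ∈ X.S ∧ X.c x t y ≠ 0 := by
  unfold cp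
  rw [Finset.mem_filter]
  refine and_congr_right fun ht => ?_
  rw [X.c_conv_ne_zero_iff hx hy ht, X.c_ne_zero_iff hx ht hy]

lemma card_cp_conv_symm {x y : BRel Ω} (hx : x ∈ X.S) (hy : y ∈ X.S) :
    (X.cp (convRel x) y).card = (X.cp (convRel y) x).card := by
  refine Finset.card_bij' (fun t _ => convRel t) (fun t _ => convRel t) ?_ ?_ ?_ ?_
  · intro t ht
    obtain ⟨htS, hc⟩ := (X.mem_cp_conv_iff hx hy).mp ht
    refine (X.mem_cp_conv_iff hy hx).mpr ⟨X.conv_mem t htS, ?_⟩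
    rw [X.c_ne_zero_iff hy (X.conv_mem t htS) hx]
    obtain ⟨α, γ, δ, h1, h2, h3⟩ := (X.c_ne_zero_iff hx htS hy).mp hc
    exact ⟨α, δ, γ, h3, mem_convRel.mpr h2, h1⟩
  · intro t ht
    obtain ⟨htS, hc⟩ := (X.mem_cp_conv_iff hy hx).mp ht
    refine (X.mem_cp_conv_iff hx hy).mpr ⟨X.conv_mem t htS, ?_⟩
    rw [X.c_ne_zero_iff hx (X.conv_mem t htS) hy]
    obtain ⟨α, γ, δ, h1, h2, h3⟩ := (X.c_ne_zero_iff hy htS hx).mp hc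
    exact ⟨α, δ, γ, h3, mem_convRel.mpr h2, h1⟩
  · intro t _
    ext ⟨a, b⟩
    simp [mem_convRel]
  · intro t _
    ext ⟨a, b⟩
    simp [mem_convRel]

lemma sum_c_over_cp {x y : BRel Ω} (hx : x ∈ X.S) (hy : y ∈ X.S) :
    ∑ t ∈ X.cp (convRel x) y, X.c x t y = X.n x := by
  rw [← X.sum_c_eq hx hy]
  refine Finset.sum_subset (Finset.filter_subset _ _) fun t ht hnt => ?_
  by_contra hc
  exact hnt ((X.mem_cp_conv_iff hx hy).mpr ⟨ht, hc⟩)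

lemma card_cp_le {x y : BRel Ω} (hx : x ∈ X.S) (hy : y ∈ X.S) :
    (X.cp (convRel x) y).card ≤ X.n x := by
  rw [← X.sum_c_over_cp hx hy, Finset.card_eq_sum_ones]
  refine Finset.sum_le_sum fun t ht => ?_
  exact Nat.one_le_iff_ne_zero.mpr ((X.mem_cp_conv_iff hx hy).mp ht).2

lemma adj_iff_card {x y : BRel Ω} (hx : x ∈ X.S) (hy : y ∈ X.S) :
    X.adj x y ↔ (X.cp (convRel x) y).card = X.n x := by
  constructor
  · intro h
    rw [← X.sum_c_over_cp hx hy, Finset.card_eq_sum_ones]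
    exact Finset.sum_congr rfl fun t ht => (h t ht).symm
  · intro h s hs
    by_contra hne
    have h1 : ∀ t ∈ X.cp (convRel x) y, 1 ≤ X.c x t y := fun t ht =>
      Nat.one_le_iff_ne_zero.mpr ((X.mem_cp_conv_iff hx hy).mp ht).2
    have h0 : X.c x s y ≠ 0 := ((X.mem_cp_conv_iff hx hy).mp hs).2
    have h2 : 2 ≤ X.c x s y := by omega
    have hlt : ∑ _t ∈ X.cp (convRel x) y, 1 < ∑ t ∈ X.cp (convRel x) y, X.c x t y :=
      Finset.sum_lt_sum h1 ⟨s, hs, by omega⟩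
    rw [← Finset.card_eq_sum_ones, X.sum_c_over_cp hx hy, h] at hlt
    exact lt_irrefl _ hlt

lemma exists_two_le {x y : BRel Ω} (hx : x ∈ X.S) (hy : y ∈ X.S)
    (hnxy : X.n x = X.n y) (h : ¬ X.adj y x) : ∃ t ∈ X.S, 2 ≤ X.c x t y := by
  have h1 : (X.cp (convRel y) x).card ≠ X.n y := fun hc => h ((X.adj_iff_card hy hx).mpr hc)
  have h2 : (X.cp (convRel y) x).card < X.n y := lt_of_le_of_ne (X.card_cp_le hy hx) h1
  have h3 : (X.cp (convRel x) y).card < X.n x := by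
    rw [X.card_cp_conv_symm hx hy, hnxy]; exact h2
  by_contra hcon
  push_neg at hcon
  have h4 : ∑ t ∈ X.cp (convRel x) y, X.c x t y ≤ (X.cp (convRel x) y).card := by
    rw [Finset.card_eq_sum_ones]
    refine Finset.sum_le_sum fun t ht => ?_
    have := hcon t ((X.mem_cp_conv_iff hx hy).mp ht).1
    omega
  rw [X.sum_c_over_cp hx hy] at h4
  omega

lemma ind_eq_card (γ γ' : Ω) :
    (Finset.univ.filter fun δ => X.rel γ δ = X.rel γ' δ).card = X.ind (X.rel γ γ') := by
  have hs : X.rel γ γ' ∈ X.S := X.rel_mem_S γ γ'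
  have hp : (γ, γ') ∈ X.rel γ γ' := X.mem_rel γ γ'
  have h1 := X.card_filter_fiber (fun δ => X.rel γ δ = X.rel γ' δ) (fun δ => X.rel γ δ)
    (fun δ => X.rel_mem_S γ δ)
  rw [h1]
  refine Finset.sum_congr rfl fun t ht => ?_
  rw [← X.c_spec t ht (convRel t) (X.conv_mem t ht) (X.rel γ γ') hs (γ, γ') hp]
  congr 1
  ext δ
  simp only [Finset.mem_filter, Finset.mem_univ, true_and, mem_convRel]
  constructor
  · rintro ⟨h1', h2'⟩
    exact ⟨(X.mem_rel_iff ht).mpr h2', (X.mem_rel_iff ht).mpr (h1'.symm.trans h2')⟩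
  · rintro ⟨h1', h2'⟩
    exact ⟨(X.rel_eq ht h1').trans (X.rel_eq ht h2').symm, X.rel_eq ht h1'⟩

lemma rel_ne_diag {γ γ' : Ω} (h : γ ≠ γ') : X.rel γ γ' ≠ diagRel Ω := by
  intro he
  have hm := X.mem_rel γ γ'
  rw [he] at hm
  simp only [diagRel, Finset.mem_filter, Finset.mem_univ, true_and] at hm
  exact h hm

lemma n_diag : X.n (diagRel Ω) = 1 := by
  obtain ⟨⟨α, β⟩, hp⟩ := X.nonempty _ X.diag_mem
  rw [← X.n_eq_card X.diag_mem α]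
  rw [show (Finset.univ.filter fun γ => (α, γ) ∈ diagRel Ω) = {α} from ?_]
  · exact Finset.card_singleton α
  · ext γ
    simp [diagRel, eq_comm]

end AssocScheme

end Aux


open scoped Classical in
lemma AssocScheme.bad_card_le (X : AssocScheme Ω) {k c : ℕ} (hk : 1 < k)
    (hmax : ∀ s ∈ X.S, s ≠ diagRel Ω → X.ind s ≤ c)
    {x : BRel Ω} (hx : x ∈ X.S) (hnx : X.n x = k) :
    ((X.Sk k).filter fun y => ¬ X.adj y x).card ≤ (k - 1) * (c - 1) := by
  obtain ⟨p0, -⟩ := X.nonempty _ X.diag_mem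
  set α₀ := p0.1 with hα₀
  set A : Finset Ω := Finset.univ.filter (fun γ => (α₀, γ) ∈ x) with hA
  have hAcard : A.card = k := by rw [hA, X.n_eq_card hx, hnx]
  set B := (X.Sk k).filter fun y => ¬ X.adj y x with hB
  set U : Finset Ω := Finset.univ.filter
    (fun β => β ≠ α₀ ∧ ∃ γ ∈ A, ∃ γ' ∈ A, γ ≠ γ' ∧ X.rel γ β = X.rel γ' β) with hU
  have hBmem : ∀ y ∈ B, y ∈ X.S ∧ X.n y = k ∧ ¬ X.adj y x := by
    intro y hy
    rw [hB, Finset.mem_filter, AssocScheme.Sk, Finset.mem_filter] at hy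
    exact ⟨hy.1.1, hy.1.2, hy.2⟩
  have hsub : ∀ y ∈ B, (Finset.univ.filter fun β => (α₀, β) ∈ y) ⊆ U := by
    intro y hy
    obtain ⟨hyS, hyk, hadj⟩ := hBmem y hy
    obtain ⟨t, htS, h2⟩ := X.exists_two_le hx hyS (by rw [hnx, hyk]) hadj
    intro β hβ
    rw [Finset.mem_filter] at hβ
    have hβy : (α₀, β) ∈ y := hβ.2
    have hβne : β ≠ α₀ := by
      intro he
      have h1 : y = diagRel Ω := by
        rw [← X.rel_eq hyS hβy, he]
        exact X.rel_eq X.diag_mem (by simp [diagRel])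
      rw [h1, X.n_diag] at hyk
      omega
    have hcount := X.c_spec x hx t htS y hyS (α₀, β) hβy
    have h2' : 1 < (Finset.univ.filter fun γ => (α₀, γ) ∈ x ∧ (γ, β) ∈ t).card := by
      rw [hcount]; omega
    obtain ⟨γ, hγ, γ', hγ', hne⟩ := Finset.one_lt_card.mp h2'
    rw [Finset.mem_filter] at hγ hγ'
    refine Finset.mem_filter.mpr ⟨Finset.mem_univ _, hβne, γ, ?_, γ', ?_, hne, ?_⟩
    · exact Finset.mem_filter.mpr ⟨Finset.mem_univ _, hγ.2.1⟩
    · exact Finset.mem_filter.mpr ⟨Finset.mem_univ _, hγ'.2.1⟩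
    · rw [X.rel_eq htS hγ.2.2, X.rel_eq htS hγ'.2.2]
  have hlow : B.card * k ≤ U.card := by
    have hd : ∀ y ∈ B, ∀ y' ∈ B, y ≠ y' →
        Disjoint (Finset.univ.filter fun β => (α₀, β) ∈ y)
          (Finset.univ.filter fun β => (α₀, β) ∈ y') := by
      intro y hy y' hy' hne
      rw [Finset.disjoint_left]
      intro β hβ hβ'
      rw [Finset.mem_filter] at hβ hβ'
      exact hne (((X.rel_eq (hBmem y hy).1 hβ.2).symm).trans (X.rel_eq (hBmem y' hy').1 hβ'.2))
    have h1 := Finset.card_biUnion hd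
    have h2 : ∀ y ∈ B, (Finset.univ.filter fun β => (α₀, β) ∈ y).card = k := by
      intro y hy
      rw [X.n_eq_card (hBmem y hy).1, (hBmem y hy).2.1]
    calc B.card * k = ∑ _y ∈ B, k := by rw [Finset.sum_const, smul_eq_mul, Nat.mul_comm]
      _ = ∑ y ∈ B, (Finset.univ.filter fun β => (α₀, β) ∈ y).card :=
          (Finset.sum_congr rfl fun y hy => (h2 y hy).symm)
      _ = (B.biUnion fun y => Finset.univ.filter fun β => (α₀, β) ∈ y).card := h1.symm
      _ ≤ U.card := Finset.card_le_card (Finset.biUnion_subset.mpr hsub)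
  have hup : U.card ≤ (k * k - k) * (c - 1) := by
    have hsubU : U ⊆ A.offDiag.biUnion
        (fun q => (Finset.univ.filter fun δ => X.rel q.1 δ = X.rel q.2 δ).erase α₀) := by
      intro β hβ
      rw [hU, Finset.mem_filter] at hβ
      obtain ⟨-, hβne, γ, hγ, γ', hγ', hne, hrel⟩ := hβ
      refine Finset.mem_biUnion.mpr ⟨(γ, γ'), Finset.mem_offDiag.mpr ⟨hγ, hγ', hne⟩, ?_⟩
      exact Finset.mem_erase.mpr ⟨hβne, Finset.mem_filter.mpr ⟨Finset.mem_univ _, hrel⟩⟩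
    have hbound : ∀ q ∈ A.offDiag,
        ((Finset.univ.filter fun δ => X.rel q.1 δ = X.rel q.2 δ).erase α₀).card ≤ c - 1 := by
      intro q hq
      obtain ⟨hq1, hq2, hq3⟩ := Finset.mem_offDiag.mp hq
      have hα₀mem : α₀ ∈ Finset.univ.filter fun δ => X.rel q.1 δ = X.rel q.2 δ := by
        refine Finset.mem_filter.mpr ⟨Finset.mem_univ _, ?_⟩
        have h1 : (q.1, α₀) ∈ convRel x := mem_convRel.mpr (Finset.mem_filter.mp hq1).2
        have h2 : (q.2, α₀) ∈ convRel x := mem_convRel.mpr (Finset.mem_filter.mp hq2).2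
        rw [X.rel_eq (X.conv_mem x hx) h1, X.rel_eq (X.conv_mem x hx) h2]
      have hcard := X.ind_eq_card q.1 q.2
      have hle : X.ind (X.rel q.1 q.2) ≤ c := hmax _ (X.rel_mem_S _ _) (X.rel_ne_diag hq3)
      rw [Finset.card_erase_of_mem hα₀mem, hcard]
      omega
    calc U.card ≤ (A.offDiag.biUnion
          (fun q => (Finset.univ.filter fun δ => X.rel q.1 δ = X.rel q.2 δ).erase α₀)).card :=
          Finset.card_le_card hsubU
      _ ≤ ∑ q ∈ A.offDiag,
            ((Finset.univ.filter fun δ => X.rel q.1 δ = X.rel q.2 δ).erase α₀).card :=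
          Finset.card_biUnion_le
      _ ≤ ∑ _q ∈ A.offDiag, (c - 1) := Finset.sum_le_sum hbound
      _ = A.offDiag.card * (c - 1) := by rw [Finset.sum_const, smul_eq_mul]
      _ = (k * k - k) * (c - 1) := by rw [Finset.offDiag_card, hAcard]
  have hcomb : B.card * k ≤ (k * k - k) * (c - 1) := hlow.trans hup
  have hkk : k * k - k = k * (k - 1) := by
    cases k with
    | zero => simp
    | succ m => simp [Nat.succ_sub_one, Nat.mul_succ, Nat.succ_mul]
  rw [hkk, Nat.mul_assoc] at hcomb
  have hkpos : 0 < k := by omega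
  exact Nat.le_of_mul_le_mul_left (by rw [Nat.mul_comm] at hcomb; exact hcomb) hkpos

theorem saturation_criterion (X : AssocScheme Ω) (k : ℕ) (hk : 1 < k) (c : ℕ)
    (hmax : ∀ s ∈ X.S, s ≠ diagRel Ω → X.ind s ≤ c)
    (hattained : ∃ s ∈ X.S, s ≠ diagRel Ω ∧ X.ind s = c)
    (hcard : (X.Sk k).card > 4 * c * (k - 1)) :
    X.kSaturated k := by
  classical
  intro T hT hTcard
  have key : ∀ x ∈ T, ((X.Sk k).filter fun y => ¬ X.adj y x).card ≤ c * (k - 1) := by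
    intro x hxT
    have hxSk := hT hxT
    rw [AssocScheme.Sk, Finset.mem_filter] at hxSk
    have h1 := X.bad_card_le hk hmax hxSk.1 hxSk.2
    calc ((X.Sk k).filter fun y => ¬ X.adj y x).card ≤ (k - 1) * (c - 1) := h1
      _ ≤ (k - 1) * c := Nat.mul_le_mul_left _ (Nat.sub_le c 1)
      _ = c * (k - 1) := Nat.mul_comm _ _
  set Bad := T.biUnion fun x => (X.Sk k).filter fun y => ¬ X.adj y x with hBad
  have hBadcard : Bad.card ≤ 4 * c * (k - 1) := by
    calc Bad.card ≤ ∑ x ∈ T, ((X.Sk k).filter fun y => ¬ X.adj y x).card :=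
        Finset.card_biUnion_le
      _ ≤ ∑ _x ∈ T, c * (k - 1) := Finset.sum_le_sum key
      _ = T.card * (c * (k - 1)) := by rw [Finset.sum_const, smul_eq_mul]
      _ ≤ 4 * (c * (k - 1)) := Nat.mul_le_mul_right _ hTcard
      _ = 4 * c * (k - 1) := by rw [Nat.mul_assoc]
  have hnotsub : ¬ (X.Sk k ⊆ Bad) := by
    intro hsub
    have := Finset.card_le_card hsub
    omega
  obtain ⟨y, hySk, hyBad⟩ := Finset.not_subset.mp hnotsub
  refine ⟨y, hySk, fun x hxT => ?_⟩
  by_contra hna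
  exact hyBad (Finset.mem_biUnion.mpr ⟨x, hxT, Finset.mem_filter.mpr ⟨hySk, hna⟩⟩)
end
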